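/- arXiv:2506.05416 — 2 statements merged into one kernel-verified Lean document; each statement's English description precedes it below -/
import Mathlib

section
/- Lemma 2 (Privacy amplification by subsampling, mutual-information form): Let X and Y be random variables on a common probability space with values in standard measurable spaces, and let S be a {0,1}-valued random variable with Pr[S = 1] = s ∈ (0,1) that is independent of X. Suppose Y is conditionally independent of X given the event {S = 0}. Then the mutual information of the pair (Y,S) with X satisfies I((Y,S); X) = s · I_{P(·|S=1)}(Y; X), where I_{P(·|S=1)}(Y;X) denotes the mutual information of Y and X computed under the probability measure conditioned on the event {S = 1}. In particular, if I_{P(·|S=1)}(Y;X) ≤ ε₀ then I((Y,S);X) ≤ s·ε₀. -/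
/-!
Conditioning on `S` writes `P = P{S = 1} • P[|S = 1] + P{S = 0} • P[|S = 0]`, and both the joint
law of `((Y, S), X)` and the product of its marginals split the same way (the law of `X` is the
same on both pieces, as `S` is independent of `X`). The pieces with `S = 1` and with `S = 0` are
carried by disjoint sets, so the KL divergence only sees the `S = 1` pieces, where it scales
linearly in the weight `P{S = 1} = s`; the `S = 0` pieces agree by conditional independence. On
`{S = 1}` the coordinate `S` is constant and can be dropped without changing mutual information.
-/

open MeasureTheory ProbabilityTheory
open scoped ENNReal ProbabilityTheory

noncomputable section
open Classical

/-- The Kullback–Leibler divergence (in nats) of `μ` from `ν`. -/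
def klDiv {α : Type*} [MeasurableSpace α] (μ ν : Measure α) : ℝ≥0∞ :=
  if μ ≪ ν ∧ Integrable (llr μ ν) μ then ENNReal.ofReal (∫ x, llr μ ν x ∂μ) else ⊤

/-- The mutual information (in nats) between random variables `Y` and `X` under the
probability measure `P`: the KL divergence of the joint law from the product of
the marginals. -/
def mutualInfo {Ω β γ : Type*} [MeasurableSpace Ω] [MeasurableSpace β] [MeasurableSpace γ]
    (P : Measure Ω) (Y : Ω → β) (X : Ω → γ) : ℝ≥0∞ :=
  klDiv (P.map (fun ω => (Y ω, X ω))) ((P.map Y).prod (P.map X))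

namespace MeasureTheory.Measure

variable {α : Type*} [MeasurableSpace α] {μ ν ρ : Measure α}

lemma absolutelyContinuous_add_add_iff (hμ : μ ⟂ₘ ρ) :
    μ + ρ ≪ ν + ρ ↔ μ ≪ ν :=
  ⟨fun h => absolutelyContinuous_of_add_of_mutuallySingular
      ((AbsolutelyContinuous.rfl.add_right ρ).trans h) hμ,
    fun h => h.add AbsolutelyContinuous.rfl⟩

lemma mutuallySingular_of_ae {p : α → Prop} (hμ : ∀ᵐ x ∂μ, p x) (hν : ∀ᵐ x ∂ν, ¬ p x) :
    μ ⟂ₘ ν :=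
  mutuallySingular_iff_disjoint_ae.2
    (Filter.disjoint_iff.2 ⟨_, hμ, _, hν, disjoint_compl_right⟩)

variable [IsFiniteMeasure μ] [IsFiniteMeasure ν] [IsFiniteMeasure ρ]

lemma rnDeriv_add_add_ae_eq_left (hν : ν ⟂ₘ ρ) :
    (μ + ρ).rnDeriv (ν + ρ) =ᵐ[ν] μ.rnDeriv ν := by
  have hν_ac : ν ≪ ν + ρ := AbsolutelyContinuous.rfl.add_right ρ
  filter_upwards [hν_ac.ae_le (rnDeriv_add μ ρ (ν + ρ)),
    rnDeriv_add_right_of_mutuallySingular (μ := μ) hν,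
    rnDeriv_eq_zero_of_mutuallySingular hν.symm hν_ac] with x hsum hμx hρx
  rw [hsum, Pi.add_apply, hμx, hρx, Pi.zero_apply, add_zero]

lemma rnDeriv_add_add_ae_eq_one (hμ : μ ⟂ₘ ρ) (hν : ν ⟂ₘ ρ) :
    (μ + ρ).rnDeriv (ν + ρ) =ᵐ[ρ] 1 := by
  have hρ_ac : ρ ≪ ν + ρ := by
    rw [add_comm]
    exact AbsolutelyContinuous.rfl.add_right ν
  have hρ_self : ρ.rnDeriv (ν + ρ) =ᵐ[ρ] 1 := by
    rw [add_comm]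
    exact (rnDeriv_add_right_of_mutuallySingular hν.symm).trans (rnDeriv_self ρ)
  filter_upwards [hρ_ac.ae_le (rnDeriv_add μ ρ (ν + ρ)),
    rnDeriv_eq_zero_of_mutuallySingular hμ hρ_ac, hρ_self] with x hsum hμx hρx
  rw [hsum, Pi.add_apply, hμx, hρx, Pi.zero_apply, zero_add]

end MeasureTheory.Measure

namespace InformationTheory

-- Inside this namespace `klDiv` is Mathlib's `InformationTheory.klDiv`, not the one above.

variable {α β : Type*} [MeasurableSpace α] [MeasurableSpace β] {μ ν ρ : Measure α}
  [IsFiniteMeasure μ] [IsFiniteMeasure ν]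

theorem klDiv_add_of_mutuallySingular [IsFiniteMeasure ρ] (hμ : μ ⟂ₘ ρ) (hν : ν ⟂ₘ ρ) :
    klDiv (μ + ρ) (ν + ρ) = klDiv μ ν := by
  by_cases hμν : μ ≪ ν
  swap
  · rw [klDiv_of_not_ac hμν,
      klDiv_of_not_ac ((Measure.absolutelyContinuous_add_add_iff hμ).not.2 hμν)]
  have hllr_μ : llr (μ + ρ) (ν + ρ) =ᵐ[μ] llr μ ν := by
    filter_upwards [hμν.ae_le (Measure.rnDeriv_add_add_ae_eq_left (μ := μ) hν)] with x hx
    simp [llr, hx]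
  have hllr_ρ : llr (μ + ρ) (ν + ρ) =ᵐ[ρ] 0 := by
    filter_upwards [Measure.rnDeriv_add_add_ae_eq_one hμ hν] with x hx
    simp [llr, hx]
  have hint_ρ : Integrable (llr (μ + ρ) (ν + ρ)) ρ :=
    (integrable_congr hllr_ρ).2 (integrable_zero _ _ _)
  by_cases hint : Integrable (llr μ ν) μ
  swap
  · rw [klDiv_of_not_integrable hint, klDiv_of_not_integrable]
    rw [integrable_add_measure, integrable_congr hllr_μ]
    exact fun h => hint h.1
  have hint_μ : Integrable (llr (μ + ρ) (ν + ρ)) μ := (integrable_congr hllr_μ).2 hint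
  rw [klDiv_of_ac_of_integrable ((Measure.absolutelyContinuous_add_add_iff hμ).2 hμν)
      (integrable_add_measure.2 ⟨hint_μ, hint_ρ⟩), klDiv_of_ac_of_integrable hμν hint,
    integral_add_measure hint_μ hint_ρ, integral_congr_ae hllr_μ, integral_congr_ae hllr_ρ,
    measureReal_add_apply, measureReal_add_apply]
  simp only [Pi.zero_apply, integral_zero]
  ring_nf

variable (μ ν) in
theorem klDiv_map_of_leftInverse {f : α → β} {g : β → α} (hf : Measurable f) (hg : Measurable g)
    (hgf : Function.LeftInverse g f) :
    klDiv (μ.map f) (ν.map f) = klDiv μ ν := by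
  refine le_antisymm (klDiv_map_le μ ν hf) ?_
  have hid : g ∘ f = id := funext hgf
  calc klDiv μ ν = klDiv ((μ.map f).map g) ((ν.map f).map g) := by
        rw [Measure.map_map hg hf, Measure.map_map hg hf, hid, Measure.map_id, Measure.map_id]
    _ ≤ klDiv (μ.map f) (ν.map f) := klDiv_map_le _ _ hg

end InformationTheory

-- Mathlib's divergence carries the correction `ν univ - μ univ`, which vanishes for measures
-- of equal mass.
theorem klDiv_eq_informationTheory_klDiv {α : Type*} [MeasurableSpace α] {μ ν : Measure α}
    (h : μ Set.univ = ν Set.univ) : klDiv μ ν = InformationTheory.klDiv μ ν := by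
  by_cases hμν : μ ≪ ν ∧ Integrable (llr μ ν) μ
  · rw [klDiv, if_pos hμν, InformationTheory.klDiv_of_ac_of_integrable hμν.1 hμν.2,
      measureReal_def, measureReal_def, h]
    simp
  · rw [klDiv, if_neg hμν, eq_comm, InformationTheory.klDiv_eq_top_iff]
    exact fun hac hint => hμν ⟨hac, hint⟩

section Conditioning

variable {Ω δ : Type*} [MeasurableSpace Ω] [MeasurableSpace δ] {P : Measure Ω} {A : Set Ω}

variable (P) in
lemma measure_eq_smul_cond_add_smul_cond_compl [IsFiniteMeasure P] (hA : MeasurableSet A) :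
    P = (P A).toNNReal • P[|A] + (P Aᶜ).toNNReal • P[|Aᶜ] := by
  ext t ht
  simp only [Measure.coe_add, Pi.add_apply, ENNReal.smul_def,
    ENNReal.coe_toNNReal (measure_ne_top P _), Measure.smul_apply, smul_eq_mul]
  rw [mul_comm, mul_comm (P Aᶜ), cond_add_cond_compl_eq hA]

lemma map_eq_smul_map_cond_add [IsFiniteMeasure P] (hA : MeasurableSet A) {f : Ω → δ}
    (hf : Measurable f) :
    P.map f = (P A).toNNReal • (P[|A]).map f + (P Aᶜ).toNNReal • (P[|Aᶜ]).map f := by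
  conv_lhs => rw [measure_eq_smul_cond_add_smul_cond_compl P hA]
  rw [Measure.map_add _ _ hf, Measure.map_smul, Measure.map_smul]

lemma map_cond_preimage_eq_map_of_indepFun [IsFiniteMeasure P] {β : Type*} [MeasurableSpace β]
    {S : Ω → δ} {X : Ω → β} (hindep : IndepFun S X P) (hX : Measurable X) {B : Set δ}
    (hB : MeasurableSet B) (hPB : P (S ⁻¹' B) ≠ 0) :
    (P[|S ⁻¹' B]).map X = P.map X := by
  ext C hC
  rw [Measure.map_apply hX hC, Measure.map_apply hX hC, cond_apply' (hX hC),
    hindep.measure_inter_preimage_eq_mul B C hB hC, ← mul_assoc,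
    ENNReal.inv_mul_cancel hPB (measure_ne_top P _), one_mul]

end Conditioning

section MutualInfo

variable {Ω β γ δ : Type*} [MeasurableSpace Ω] [MeasurableSpace β] [MeasurableSpace γ]
  [MeasurableSpace δ] {P : Measure Ω} {X : Ω → β} {Y : Ω → γ}

lemma mutualInfo_eq_klDiv [IsProbabilityMeasure P] (hY : Measurable Y) (hX : Measurable X) :
    mutualInfo P Y X
      = InformationTheory.klDiv (P.map (fun ω => (Y ω, X ω))) ((P.map Y).prod (P.map X)) := by
  have := Measure.isProbabilityMeasure_map (μ := P) (hY.prodMk hX).aemeasurable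
  have := Measure.isProbabilityMeasure_map (μ := P) hY.aemeasurable
  have := Measure.isProbabilityMeasure_map (μ := P) hX.aemeasurable
  exact klDiv_eq_informationTheory_klDiv (by simp only [measure_univ])

lemma mutualInfo_prodMk_of_ae_eq_const [IsProbabilityMeasure P] (hY : Measurable Y)
    (hX : Measurable X) {S : Ω → δ} (hS : Measurable S) {k : δ} (hSk : ∀ᵐ ω ∂P, S ω = k) :
    mutualInfo P (fun ω => (Y ω, S ω)) X = mutualInfo P Y X := by
  have hjoint : P.map (fun ω => ((Y ω, S ω), X ω))
      = (P.map (fun ω => (Y ω, X ω))).map (fun p => ((p.1, k), p.2)) := by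
    rw [Measure.map_map (by fun_prop) (by fun_prop)]
    exact Measure.map_congr (by filter_upwards [hSk] with ω h; simp [h])
  have hmarg : P.map (fun ω => (Y ω, S ω)) = (P.map Y).map (fun y => (y, k)) := by
    rw [Measure.map_map (by fun_prop) hY]
    exact Measure.map_congr (by filter_upwards [hSk] with ω h; simp [h])
  have hprod : ((P.map Y).map (fun y => (y, k))).prod (P.map X)
      = ((P.map Y).prod (P.map X)).map (fun p => ((p.1, k), p.2)) := by
    conv_lhs => rw [← Measure.map_id (μ := P.map X)]
    exact Measure.map_prod_map _ _ (by fun_prop) measurable_id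
  rw [mutualInfo_eq_klDiv (hY.prodMk hS) hX, mutualInfo_eq_klDiv hY hX, hjoint, hmarg, hprod]
  exact InformationTheory.klDiv_map_of_leftInverse _ _ (by fun_prop)
    (g := fun q => (q.1.1, q.2)) (by fun_prop) (fun _ => rfl)

theorem mutualInfo_eq_mul_mutualInfo_cond [IsProbabilityMeasure P] {Z : Ω → δ}
    (hZ : Measurable Z) (hX : Measurable X) {T : Set δ} (hT : MeasurableSet T)
    (hPT : P (Z ⁻¹' T) ≠ 0) (hXT : (P[|Z ⁻¹' T]).map X = P.map X)
    (hXTc : (P[|(Z ⁻¹' T)ᶜ]).map X = P.map X) (hindep : IndepFun Z X P[|(Z ⁻¹' T)ᶜ]) :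
    mutualInfo P Z X = P (Z ⁻¹' T) * mutualInfo P[|Z ⁻¹' T] Z X := by
  set A := Z ⁻¹' T
  have hA : MeasurableSet A := hZ hT
  have := cond_isProbabilityMeasure hPT
  have hprod : (P.map Z).prod (P.map X) = (P A).toNNReal • (P[|A].map Z).prod (P[|A].map X)
      + (P Aᶜ).toNNReal • P[|Aᶜ].map (fun ω => (Z ω, X ω)) := by
    rw [map_eq_smul_map_cond_add hA hZ, Measure.add_prod, Measure.prod_smul_left,
      Measure.prod_smul_left, hXT,
      (indepFun_iff_map_prod_eq_prod_map_map hZ.aemeasurable hX.aemeasurable).1 hindep, hXTc]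
  have hin : ∀ᵐ ω ∂P[|A], Z ω ∈ T := ae_cond_mem hA
  have hout : ∀ᵐ ω ∂P[|Aᶜ], Z ω ∉ T := ae_cond_mem hA.compl
  have hjoint_in : ∀ᵐ q ∂P[|A].map (fun ω => (Z ω, X ω)), q.1 ∈ T :=
    (ae_map_iff (hZ.prodMk hX).aemeasurable (measurable_fst hT)).2 hin
  have hprod_in : ∀ᵐ q ∂(P[|A].map Z).prod (P[|A].map X), q.1 ∈ T :=
    Measure.quasiMeasurePreserving_fst.ae ((ae_map_iff hZ.aemeasurable hT).2 hin)
  have hjoint_out : ∀ᵐ q ∂P[|Aᶜ].map (fun ω => (Z ω, X ω)), q.1 ∉ T :=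
    (ae_map_iff (hZ.prodMk hX).aemeasurable (measurable_fst hT).compl).2 hout
  rw [mutualInfo_eq_klDiv hZ hX, mutualInfo_eq_klDiv hZ hX, hprod,
    map_eq_smul_map_cond_add hA (hZ.prodMk hX),
    InformationTheory.klDiv_add_of_mutuallySingular
      (Measure.mutuallySingular_of_ae (Measure.ae_smul_measure hjoint_in _)
        (Measure.ae_smul_measure hjoint_out _))
      (Measure.mutuallySingular_of_ae (Measure.ae_smul_measure hprod_in _)
        (Measure.ae_smul_measure hjoint_out _)),
    InformationTheory.klDiv_smul_same, ENNReal.coe_toNNReal (measure_ne_top P A)]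

end MutualInfo

theorem privacy_amplification_subsampling_general {Ω β γ : Type*} [MeasurableSpace Ω]
    [MeasurableSpace β] [MeasurableSpace γ]
    (P : Measure Ω) [IsProbabilityMeasure P]
    (X : Ω → β) (hX : Measurable X) (Y : Ω → γ) (hY : Measurable Y)
    (S : Ω → ℕ) (hS : Measurable S) (hSval : ∀ ω, S ω = 0 ∨ S ω = 1)
    (s : ℝ) (hs : s ∈ Set.Ioo (0 : ℝ) 1)
    (hPS1 : P {ω | S ω = 1} = ENNReal.ofReal s)
    (hindep : IndepFun S X P)
    (hcondindep : IndepFun Y X (P[|{ω | S ω = 0}]))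
    (ε₀ : ℝ≥0∞) :
    mutualInfo P (fun ω => (Y ω, S ω)) X
        = ENNReal.ofReal s * mutualInfo (P[|{ω | S ω = 1}]) Y X ∧
    (mutualInfo (P[|{ω | S ω = 1}]) Y X ≤ ε₀ →
      mutualInfo P (fun ω => (Y ω, S ω)) X ≤ ENNReal.ofReal s * ε₀) := by
  set A := {ω | S ω = 1}
  have hA : MeasurableSet A := hS (measurableSet_singleton 1)
  have hAc : {ω | S ω = 0} = Aᶜ := by
    ext ω
    rcases hSval ω with h | h <;> simp [A, h]
  rw [hAc] at hcondindep
  have hPA : P A ≠ 0 := hPS1 ▸ (ENNReal.ofReal_pos.2 hs.1).ne'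
  have hPAc : P Aᶜ ≠ 0 := by
    rw [measure_compl hA (measure_ne_top P A), measure_univ]
    exact (tsub_pos_of_lt (hPS1 ▸ ENNReal.ofReal_lt_one.2 hs.2)).ne'
  have hYS_indep : IndepFun (fun ω => (Y ω, S ω)) X P[|Aᶜ] :=
    (hcondindep.comp (measurable_id.prodMk (measurable_const (a := 0))) measurable_id).congr
      ((ae_cond_mem hA.compl).mono fun ω hω => by simp [(hSval ω).resolve_right hω])
      .rfl
  have := cond_isProbabilityMeasure hPA
  have hS1 : ∀ᵐ ω ∂P[|A], S ω = 1 := ae_cond_mem hA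
  have hmain :
      mutualInfo P (fun ω => (Y ω, S ω)) X = ENNReal.ofReal s * mutualInfo P[|A] Y X := by
    rw [← hPS1, ← mutualInfo_prodMk_of_ae_eq_const hY hX hS hS1]
    -- `A` is the preimage of `{q | q.2 = 1}` under `(Y, S)`, definitionally.
    exact mutualInfo_eq_mul_mutualInfo_cond (hY.prodMk hS) hX (T := {q | q.2 = 1})
      (measurable_snd (measurableSet_singleton 1)) hPA
      (map_cond_preimage_eq_map_of_indepFun hindep hX (measurableSet_singleton 1) hPA)
      (map_cond_preimage_eq_map_of_indepFun hindep hX (measurableSet_singleton 1).compl hPAc)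
      hYS_indep
  exact ⟨hmain, fun h => hmain ▸ by gcongr⟩

/-- Lemma 2 (Privacy amplification by subsampling, mutual-information form):
if `S` is a `{0,1}`-valued random variable with `Pr[S = 1] = s ∈ (0,1)` independent of `X`,
and `Y` is conditionally independent of `X` given the event `{S = 0}`, then
`I((Y,S); X) = s · I_{P(·|S=1)}(Y; X)`; in particular, if `I_{P(·|S=1)}(Y;X) ≤ ε₀` then
`I((Y,S);X) ≤ s·ε₀`. -/
theorem privacy_amplification_subsampling {Ω β γ : Type*} [MeasurableSpace Ω]
    [MeasurableSpace β] [StandardBorelSpace β] [MeasurableSpace γ] [StandardBorelSpace γ]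
    (P : Measure Ω) [IsProbabilityMeasure P]
    (X : Ω → β) (hX : Measurable X) (Y : Ω → γ) (hY : Measurable Y)
    (S : Ω → ℕ) (hS : Measurable S) (hSval : ∀ ω, S ω = 0 ∨ S ω = 1)
    (s : ℝ) (hs : s ∈ Set.Ioo (0 : ℝ) 1)
    (hPS1 : P {ω | S ω = 1} = ENNReal.ofReal s)
    (hindep : IndepFun S X P)
    (hcondindep : IndepFun Y X (P[|{ω | S ω = 0}]))
    (ε₀ : ℝ≥0∞) :
    mutualInfo P (fun ω => (Y ω, S ω)) X
        = ENNReal.ofReal s * mutualInfo (P[|{ω | S ω = 1}]) Y X ∧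
    (mutualInfo (P[|{ω | S ω = 1}]) Y X ≤ ε₀ →
      mutualInfo P (fun ω => (Y ω, S ω)) X ≤ ENNReal.ofReal s * ε₀) :=
  privacy_amplification_subsampling_general P X hX Y hY S hS hSval s hs hPS1 hindep hcondindep ε₀

end
end

section
/- Masked-release amplification: Let X and W be random variables on a common probability space with values in standard measurable spaces, and let Z be a Bernoulli(p) random variable (p ∈ (0,1)) independent of the pair (W,X). Define the released variable Y by Y = (1, W) if Z = 1 and Y = (0, ⊥) if Z = 0, where ⊥ is a fixed symbol. Then I(Y; X) = p · I(W; X). In particular I(Y;X) ≤ p·I(W;X). -/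
open MeasureTheory ProbabilityTheory
open scoped ENNReal

noncomputable section
open Classical

lemma isFiniteMeasure_smul' {α : Type*} [MeasurableSpace α] {c : ℝ≥0∞} (hc : c ≠ ⊤)
    (m : Measure α) [IsFiniteMeasure m] : IsFiniteMeasure (c • m) :=
  ⟨by rw [Measure.smul_apply, smul_eq_mul]; exact ENNReal.mul_lt_top hc.lt_top (measure_lt_top m _)⟩

lemma smul_prod' {α β : Type*} [MeasurableSpace α] [MeasurableSpace β]
    (c : ℝ≥0∞) (μ : Measure α) (ν : Measure β) [SFinite μ] [SFinite ν] :
    (c • μ).prod ν = c • (μ.prod ν) := by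
  ext s hs
  rw [Measure.prod_apply hs, lintegral_smul_measure, Measure.smul_apply, smul_eq_mul,
    Measure.prod_apply hs, smul_eq_mul]

lemma klDiv_smul' {α : Type*} [MeasurableSpace α] (μ ν : Measure α)
    [IsFiniteMeasure μ] [IsFiniteMeasure ν] {c : ℝ≥0∞} (hc0 : c ≠ 0) (hc : c ≠ ⊤) :
    klDiv (c • μ) (c • ν) = c * klDiv μ ν := by
  have hfinμ : IsFiniteMeasure (c • μ) := isFiniteMeasure_smul' hc μ
  have hfinν : IsFiniteMeasure (c • ν) := isFiniteMeasure_smul' hc ν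
  have hac_iff : c • μ ≪ c • ν ↔ μ ≪ ν := by
    constructor
    · intro h s hs
      have : (c • ν) s = 0 := by simp [Measure.smul_apply, hs]
      have := h this
      simpa [Measure.smul_apply, hc0] using this
    · intro h s hs
      have hνs : ν s = 0 := by
        simpa [Measure.smul_apply, hc0] using hs
      simp [Measure.smul_apply, h hνs]
  by_cases hac : μ ≪ ν
  · have hrn : (c • μ).rnDeriv (c • ν) =ᵐ[ν] μ.rnDeriv ν := by
      have hwd : (c • ν).withDensity (μ.rnDeriv ν) = c • μ := by
        rw [withDensity_smul_measure, Measure.withDensity_rnDeriv_eq μ ν hac]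
      have := Measure.rnDeriv_withDensity (c • ν) (Measure.measurable_rnDeriv μ ν)
      rw [hwd, Measure.ae_ennreal_smul_measure_eq hc0] at this
      exact this
    have hllr : llr (c • μ) (c • ν) =ᵐ[ν] llr μ ν := by
      filter_upwards [hrn] with x hx
      simp [llr, hx]
    have hllrμ : llr (c • μ) (c • ν) =ᵐ[μ] llr μ ν := hac.ae_le hllr
    have hint_iff : Integrable (llr (c • μ) (c • ν)) (c • μ) ↔ Integrable (llr μ ν) μ := by
      rw [integrable_smul_measure hc0 hc]
      exact integrable_congr hllrμ
    by_cases hint : Integrable (llr μ ν) μ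
    · rw [klDiv, klDiv, if_pos ⟨hac_iff.2 hac, hint_iff.2 hint⟩, if_pos ⟨hac, hint⟩]
      rw [integral_smul_measure, integral_congr_ae hllrμ, smul_eq_mul,
        ENNReal.ofReal_mul ENNReal.toReal_nonneg, ENNReal.ofReal_toReal hc]
    · rw [klDiv, klDiv, if_neg fun h => hint (hint_iff.1 h.2), if_neg fun h => hint h.2,
        ENNReal.mul_top hc0]
  · rw [klDiv, klDiv, if_neg fun h => hac (hac_iff.1 h.1), if_neg fun h => hac h.1,
      ENNReal.mul_top hc0]

lemma klDiv_map' {α β : Type*} [MeasurableSpace α] [MeasurableSpace β] {f : α → β}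
    (hf : MeasurableEmbedding f) (μ ν : Measure α) [IsFiniteMeasure μ] [IsFiniteMeasure ν] :
    klDiv (μ.map f) (ν.map f) = klDiv μ ν := by
  have hac_iff : μ.map f ≪ ν.map f ↔ μ ≪ ν := by
    constructor
    · intro h s hs
      have h1 : ν.map f (f '' s) = 0 := by
        rw [hf.map_apply, hf.injective.preimage_image, hs]
      have h2 := h h1
      rwa [hf.map_apply, hf.injective.preimage_image] at h2
    · exact fun h => hf.absolutelyContinuous_map h
  by_cases hac : μ ≪ ν
  · have hrn := hf.rnDeriv_map μ ν
    have hllr : (fun x => llr (μ.map f) (ν.map f) (f x)) =ᵐ[ν] llr μ ν := by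
      filter_upwards [hrn] with x hx
      simp [llr, hx]
    have hllrμ : (fun x => llr (μ.map f) (ν.map f) (f x)) =ᵐ[μ] llr μ ν := hac.ae_le hllr
    have hint_iff : Integrable (llr (μ.map f) (ν.map f)) (μ.map f) ↔ Integrable (llr μ ν) μ := by
      rw [integrable_map_measure (measurable_llr _ _).aestronglyMeasurable
        hf.measurable.aemeasurable]
      exact integrable_congr hllrμ
    by_cases hint : Integrable (llr μ ν) μ
    · rw [klDiv, klDiv, if_pos ⟨hac_iff.2 hac, hint_iff.2 hint⟩, if_pos ⟨hac, hint⟩]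
      rw [integral_map hf.measurable.aemeasurable (measurable_llr _ _).aestronglyMeasurable,
        integral_congr_ae hllrμ]
    · rw [klDiv, klDiv, if_neg fun h => hint (hint_iff.1 h.2), if_neg fun h => hint h.2]
  · rw [klDiv, klDiv, if_neg fun h => hac (hac_iff.1 h.1), if_neg fun h => hac h.1]

lemma klDiv_add_of_disjoint' {α : Type*} [MeasurableSpace α] {A A' B : Measure α}
    [IsFiniteMeasure A] [IsFiniteMeasure A'] [IsFiniteMeasure B]
    {S : Set α} (hS : MeasurableSet S) (hA : A Sᶜ = 0) (hA' : A' Sᶜ = 0) (hB : B S = 0) :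
    klDiv (A + B) (A' + B) = klDiv A A' := by
  have hAae : ∀ᵐ x ∂A, x ∈ S := by
    rw [ae_iff]; exact hA
  have hA'ae : ∀ᵐ x ∂A', x ∈ S := by
    rw [ae_iff]; exact hA'
  have hBae : ∀ᵐ x ∂B, x ∉ S := by
    rw [ae_iff]; simpa using hB
  have hac_rev : A ≪ A' → A + B ≪ A' + B := by
    intro h s hs
    rw [Measure.add_apply] at hs ⊢
    rcases add_eq_zero.1 hs with ⟨h1, h2⟩
    rw [h h1, h2, add_zero]
  have hac_iff : A + B ≪ A' + B ↔ A ≪ A' := by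
    refine ⟨fun h s hs => ?_, hac_rev⟩
    have h1 : (A' + B) (s ∩ S) = 0 := by
      rw [Measure.add_apply, add_eq_zero]
      constructor
      · exact measure_mono_null Set.inter_subset_left hs
      · exact measure_mono_null Set.inter_subset_right hB
    have h2 : A (s ∩ S) = 0 := by
      have := h h1
      rw [Measure.add_apply, add_eq_zero] at this
      exact this.1
    have hle : A s ≤ A (s ∩ S) + A Sᶜ := by
      refine (measure_mono fun x hx => ?_).trans (measure_union_le _ _)
      by_cases hxS : x ∈ S
      · exact Or.inl ⟨hx, hxS⟩
      · exact Or.inr hxS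
    rw [h2, hA, add_zero] at hle
    exact le_antisymm hle zero_le
  set h : α → ℝ≥0∞ := fun x => S.indicator (A.rnDeriv A') x + Sᶜ.indicator 1 x with hh
  have hhm : Measurable h :=
    ((Measure.measurable_rnDeriv A A').indicator hS).add (measurable_one.indicator hS.compl)
  by_cases hac : A ≪ A'
  · have hacJ : A + B ≪ A' + B := hac_rev hac
    have hwd : (A' + B).withDensity h = A + B := by
      rw [withDensity_add_measure]
      have e1 : A'.withDensity h = A := by
        rw [withDensity_congr_ae (g := A.rnDeriv A') ?_, Measure.withDensity_rnDeriv_eq A A' hac]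
        filter_upwards [hA'ae] with x hx
        simp [hh, Set.indicator_apply, hx]
      have e2 : B.withDensity h = B := by
        rw [withDensity_congr_ae (g := 1) ?_, withDensity_one]
        filter_upwards [hBae] with x hx
        simp [hh, Set.indicator_apply, hx]
      rw [e1, e2]
    have hrn : (A + B).rnDeriv (A' + B) =ᵐ[A' + B] h := by
      conv_lhs => rw [← hwd]
      exact Measure.rnDeriv_withDensity (A' + B) hhm
    have hrnJ : (A + B).rnDeriv (A' + B) =ᵐ[A + B] h := hacJ.ae_le hrn
    have hSJ : ∀ᵐ x ∂(A + B), x ∈ S → x ∈ S := ae_of_all _ fun _ hx => hx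
    have hllr : llr (A + B) (A' + B) =ᵐ[A + B] S.indicator (llr A A') := by
      filter_upwards [hrnJ] with x hx
      by_cases hxS : x ∈ S
      · simp [llr, hx, hh, Set.indicator_apply, hxS]
      · simp [llr, hx, hh, Set.indicator_apply, hxS]
    have hindA : S.indicator (llr A A') =ᵐ[A] llr A A' := by
      filter_upwards [hAae] with x hx
      rw [Set.indicator_of_mem hx]
    have hindB : S.indicator (llr A A') =ᵐ[B] 0 := by
      filter_upwards [hBae] with x hx
      rw [Set.indicator_of_notMem hx]; rfl
    have hint_iff : Integrable (llr (A + B) (A' + B)) (A + B) ↔ Integrable (llr A A') A := by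
      rw [integrable_congr hllr, integrable_add_measure]
      constructor
      · intro hI
        exact (integrable_congr hindA).1 hI.1
      · intro hI
        exact ⟨(integrable_congr hindA).2 hI,
          (integrable_congr hindB).2 (integrable_zero _ _ _)⟩
    by_cases hint : Integrable (llr A A') A
    · rw [klDiv, klDiv, if_pos ⟨hacJ, hint_iff.2 hint⟩, if_pos ⟨hac, hint⟩]
      congr 1
      rw [integral_congr_ae hllr, integral_add_measure ((integrable_congr hindA).2 hint)
        ((integrable_congr hindB).2 (integrable_zero _ _ _)),
        integral_congr_ae hindA, integral_congr_ae hindB]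
      simp
    · rw [klDiv, klDiv, if_neg fun hc => hint (hint_iff.1 hc.2), if_neg fun hc => hint hc.2]
  · rw [klDiv, klDiv, if_neg fun hc => hac (hac_iff.1 hc.1), if_neg fun hc => hac hc.1]

/-- Masked-release amplification: if `Z ~ Bernoulli(p)` is independent of the pair `(W,X)`
and the released variable is `Y = (1, W)` when `Z = 1` and `(0, ⊥)` when `Z = 0` (with `⊥`
a fixed symbol, here `Sum.inr ()`), then `I(Y;X) = p·I(W;X)`; in particular
`I(Y;X) ≤ p·I(W;X)`. -/
theorem masked_release_amplification {Ω β γ : Type*} [MeasurableSpace Ω]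
    [MeasurableSpace β] [StandardBorelSpace β] [MeasurableSpace γ] [StandardBorelSpace γ]
    (P : Measure Ω) [IsProbabilityMeasure P]
    (W : Ω → β) (hW : Measurable W) (X : Ω → γ) (hX : Measurable X)
    (Z : Ω → Bool) (hZ : Measurable Z)
    (p : ℝ) (hp : p ∈ Set.Ioo (0 : ℝ) 1)
    (hBern : P {ω | Z ω = true} = ENNReal.ofReal p)
    (hindep : IndepFun Z (fun ω => (W ω, X ω)) P) :
    mutualInfo P
        (fun ω => ((if Z ω = true then (true, (Sum.inl (W ω) : β ⊕ Unit))
          else (false, (Sum.inr () : β ⊕ Unit))) : Bool × (β ⊕ Unit))) X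
      = ENNReal.ofReal p * mutualInfo P W X ∧
    mutualInfo P
        (fun ω => ((if Z ω = true then (true, (Sum.inl (W ω) : β ⊕ Unit))
          else (false, (Sum.inr () : β ⊕ Unit))) : Bool × (β ⊕ Unit))) X
      ≤ ENNReal.ofReal p * mutualInfo P W X := by
  set q : ℝ≥0∞ := ENNReal.ofReal p with hq
  set q' : ℝ≥0∞ := ENNReal.ofReal (1 - p) with hq'
  have hq0 : q ≠ 0 := by
    simp [hq, ENNReal.ofReal_eq_zero, not_le, hp.1]
  have hqt : q ≠ ⊤ := ENNReal.ofReal_ne_top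
  have hq't : q' ≠ ⊤ := ENNReal.ofReal_ne_top
  set μ : Measure (β × γ) := P.map (fun ω => (W ω, X ω)) with hμ
  set μW : Measure β := P.map W with hμW
  set νX : Measure γ := P.map X with hνX
  have hμprob : IsProbabilityMeasure μ := Measure.isProbabilityMeasure_map (hW.prodMk hX).aemeasurable
  have hμWprob : IsProbabilityMeasure μW := Measure.isProbabilityMeasure_map hW.aemeasurable
  have hνXprob : IsProbabilityMeasure νX := Measure.isProbabilityMeasure_map hX.aemeasurable
  -- the law of Z
  have hZlaw : P.map Z = q • Measure.dirac true + q' • Measure.dirac false := by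
    refine Measure.ext_of_singleton fun a => ?_
    rw [Measure.map_apply hZ (measurableSet_singleton a)]
    cases a
    · have hpre : Z ⁻¹' {false} = {ω | Z ω = true}ᶜ := by
        ext ω; cases hzb : Z ω <;> simp [hzb]
      have hms : MeasurableSet {ω | Z ω = true} := hZ (measurableSet_singleton true)
      rw [hpre, measure_compl hms (measure_ne_top _ _), hBern, measure_univ]
      have : (1 : ℝ≥0∞) - ENNReal.ofReal p = ENNReal.ofReal (1 - p) := by
        rw [← ENNReal.ofReal_one, ← ENNReal.ofReal_sub _ hp.1.le]
      simp [hq, hq', this]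
    · have htr : Z ⁻¹' {true} = {ω | Z ω = true} := rfl
      rw [htr, hBern]
      simp [hq]
  -- embeddings
  have hinl : MeasurableEmbedding (Sum.inl : β → β ⊕ Unit) :=
    ⟨Sum.inl_injective, measurable_inl, fun _ hs => hs.inl_image⟩
  have he : MeasurableEmbedding (fun w : β => ((true : Bool), (Sum.inl w : β ⊕ Unit))) :=
    MeasurableEmbedding.prodMk_left true hinl
  set f : β × γ → (Bool × (β ⊕ Unit)) × γ :=
    fun wx => (((true : Bool), (Sum.inl wx.1 : β ⊕ Unit)), wx.2) with hfdef
  have hfe : MeasurableEmbedding f := he.prodMap MeasurableEmbedding.id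
  set c : γ → (Bool × (β ⊕ Unit)) × γ :=
    Prod.mk (((false : Bool), (Sum.inr () : β ⊕ Unit))) with hcdef
  have hcm : Measurable c := measurable_prodMk_left
  -- the joint map
  set g : Bool × (β × γ) → (Bool × (β ⊕ Unit)) × γ :=
    fun zw => ((if zw.1 = true then ((true : Bool), (Sum.inl zw.2.1 : β ⊕ Unit))
      else (false, Sum.inr ())), zw.2.2) with hgdef
  have hgm : Measurable g := by
    apply Measurable.prodMk ?_ (measurable_snd.comp measurable_snd)
    apply Measurable.ite ?_ ?_ measurable_const
    · exact measurable_fst (measurableSet_singleton true)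
    · exact (measurable_const.prodMk
        (measurable_inl.comp (measurable_fst.comp measurable_snd)))
  have hjoint : P.map (fun ω => (Z ω, (W ω, X ω))) = (P.map Z).prod μ :=
    (indepFun_iff_map_prod_eq_prod_map_map hZ.aemeasurable
      (hW.prodMk hX).aemeasurable).mp hindep
  have hgcomp1 : g ∘ Prod.mk true = f := by
    funext wx; simp [hgdef, hfdef]
  have hgcomp2 : g ∘ Prod.mk false = c ∘ Prod.snd := by
    funext wx; simp [hgdef, hcdef]
  have hJ : P.map (fun ω =>
      (((if Z ω = true then ((true : Bool), (Sum.inl (W ω) : β ⊕ Unit))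
        else (false, Sum.inr ())) : Bool × (β ⊕ Unit)), X ω))
      = q • μ.map f + q' • νX.map c := by
    have h1 : (fun ω =>
        (((if Z ω = true then ((true : Bool), (Sum.inl (W ω) : β ⊕ Unit))
          else (false, Sum.inr ())) : Bool × (β ⊕ Unit)), X ω))
        = g ∘ (fun ω => (Z ω, (W ω, X ω))) := rfl
    rw [h1, ← Measure.map_map hgm (hZ.prodMk (hW.prodMk hX)), hjoint, hZlaw,
      Measure.add_prod, smul_prod', smul_prod', Measure.dirac_prod, Measure.dirac_prod,
      Measure.map_add _ _ hgm, Measure.map_smul, Measure.map_smul,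
      Measure.map_map hgm measurable_prodMk_left,
      Measure.map_map hgm measurable_prodMk_left, hgcomp1, hgcomp2,
      ← Measure.map_map hcm measurable_snd]
    have h2 : μ.map Prod.snd = νX := by
      rw [hμ, Measure.map_map measurable_snd (hW.prodMk hX)]; rfl
    rw [h2]
  -- the marginal law of Y
  have hfst : Measurable (Prod.fst : (Bool × (β ⊕ Unit)) × γ → Bool × (β ⊕ Unit)) :=
    measurable_fst
  have hL : P.map (fun ω =>
      ((if Z ω = true then ((true : Bool), (Sum.inl (W ω) : β ⊕ Unit))
        else (false, Sum.inr ())) : Bool × (β ⊕ Unit)))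
      = q • μW.map (fun w : β => ((true : Bool), (Sum.inl w : β ⊕ Unit)))
        + q' • Measure.dirac (((false : Bool), (Sum.inr () : β ⊕ Unit))) := by
    have h1 : P.map (fun ω =>
        ((if Z ω = true then ((true : Bool), (Sum.inl (W ω) : β ⊕ Unit))
          else (false, Sum.inr ())) : Bool × (β ⊕ Unit)))
        = (P.map (fun ω =>
          (((if Z ω = true then ((true : Bool), (Sum.inl (W ω) : β ⊕ Unit))
            else (false, Sum.inr ())) : Bool × (β ⊕ Unit)), X ω))).map Prod.fst := by
      rw [Measure.map_map hfst]
      · rfl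
      · exact Measurable.prodMk (by
          apply Measurable.ite ?_ ?_ measurable_const
          · exact hZ (measurableSet_singleton true)
          · exact measurable_const.prodMk (measurable_inl.comp hW)) hX
    rw [h1, hJ, Measure.map_add _ _ hfst, Measure.map_smul, Measure.map_smul,
      Measure.map_map hfst hfe.measurable, Measure.map_map hfst hcm]
    have h2 : (Prod.fst ∘ f : β × γ → Bool × (β ⊕ Unit))
        = (fun w : β => ((true : Bool), (Sum.inl w : β ⊕ Unit))) ∘ Prod.fst := rfl
    have h3 : (Prod.fst ∘ c : γ → Bool × (β ⊕ Unit))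
        = fun _ => (((false : Bool), (Sum.inr () : β ⊕ Unit))) := rfl
    rw [h2, h3, ← Measure.map_map he.measurable measurable_fst]
    have h4 : μ.map Prod.fst = μW := by
      rw [hμ, Measure.map_map measurable_fst (hW.prodMk hX)]; rfl
    rw [h4, Measure.map_const, measure_univ, one_smul]
  -- the product of the marginals
  have hPi : (P.map (fun ω =>
      ((if Z ω = true then ((true : Bool), (Sum.inl (W ω) : β ⊕ Unit))
        else (false, Sum.inr ())) : Bool × (β ⊕ Unit)))).prod νX
      = q • (μW.prod νX).map f + q' • νX.map c := by
    rw [hL, Measure.add_prod, smul_prod', smul_prod', Measure.dirac_prod]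
    congr 1
    have h5 : νX = νX.map id := (Measure.map_id).symm
    conv_lhs => rw [h5]
    rw [Measure.map_prod_map _ _ he.measurable measurable_id]
    rfl
  -- assembling
  have hmain : mutualInfo P
      (fun ω => ((if Z ω = true then (true, (Sum.inl (W ω) : β ⊕ Unit))
        else (false, (Sum.inr () : β ⊕ Unit))) : Bool × (β ⊕ Unit))) X
      = q * mutualInfo P W X := by
    rw [mutualInfo, hJ, ← hνX, hPi]
    have hfinA : IsFiniteMeasure (q • μ.map f) := isFiniteMeasure_smul' hqt _
    have hfinA' : IsFiniteMeasure (q • (μW.prod νX).map f) := isFiniteMeasure_smul' hqt _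
    have hfinB : IsFiniteMeasure (q' • νX.map c) := isFiniteMeasure_smul' hq't _
    have hS : MeasurableSet {yx : (Bool × (β ⊕ Unit)) × γ | yx.1.1 = true} :=
      (measurable_fst.comp measurable_fst) (measurableSet_singleton true)
    have hA : (q • μ.map f) {yx : (Bool × (β ⊕ Unit)) × γ | yx.1.1 = true}ᶜ = 0 := by
      rw [Measure.smul_apply, Measure.map_apply hfe.measurable hS.compl]
      have : f ⁻¹' {yx : (Bool × (β ⊕ Unit)) × γ | yx.1.1 = true}ᶜ = ∅ := by
        ext wx; simp [hfdef]
      rw [this]; simp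
    have hA' : (q • (μW.prod νX).map f) {yx : (Bool × (β ⊕ Unit)) × γ | yx.1.1 = true}ᶜ
        = 0 := by
      rw [Measure.smul_apply, Measure.map_apply hfe.measurable hS.compl]
      have : f ⁻¹' {yx : (Bool × (β ⊕ Unit)) × γ | yx.1.1 = true}ᶜ = ∅ := by
        ext wx; simp [hfdef]
      rw [this]; simp
    have hB : (q' • νX.map c) {yx : (Bool × (β ⊕ Unit)) × γ | yx.1.1 = true} = 0 := by
      rw [Measure.smul_apply, Measure.map_apply hcm hS]
      have : c ⁻¹' {yx : (Bool × (β ⊕ Unit)) × γ | yx.1.1 = true} = ∅ := by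
        ext x; simp [hcdef]
      rw [this]; simp
    rw [klDiv_add_of_disjoint' hS hA hA' hB, klDiv_smul' _ _ hq0 hqt,
      klDiv_map' hfe, mutualInfo, ← hμ, ← hμW, ← hνX]
  exact ⟨hmain, le_of_eq hmain⟩

end
end
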